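/- arXiv:2507.03889 — 3 statements merged into one kernel-verified Lean document; each statement's English description precedes it below -/
import Mathlib

section
/- Let n ≥ 3 and let G = C_{n,n} be the crown graph on vertex set {1,...,2n}. If T ⊆ [2n] satisfies |X \ T| ≥ 2, |Y \ T| ≥ 2, and |X \ T| + |Y \ T| ≥ 5, where X is the set of odd vertices and Y the set of even vertices, then the induced subgraph of G on the complement of T is connected. -/
open SimpleGraph

/-- The crown graph `C_{n,n}`: vertices `Fin (2*n)`, where index `2i-2` plays the role of the
odd-labelled vertex `2i-1` of the paper and index `2i-1` the even-labelled vertex `2i`.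
An even index `u` and an odd index `v` are adjacent iff `v ≠ u + 1`. -/
def crownGraph (n : ℕ) : SimpleGraph (Fin (2 * n)) where
  Adj u v := (u.val % 2 = 0 ∧ v.val % 2 = 1 ∧ v.val ≠ u.val + 1) ∨
             (v.val % 2 = 0 ∧ u.val % 2 = 1 ∧ u.val ≠ v.val + 1)
  symm := ⟨by intro u v h; tauto⟩
  loopless := ⟨by intro u h; rcases h with ⟨h1, h2, _⟩ | ⟨h1, h2, _⟩ <;> omega⟩

/-- The part `X` (odd-labelled vertices of the paper): even indices. -/
def crownX (n : ℕ) : Finset (Fin (2 * n)) := Finset.univ.filter (fun u => u.val % 2 = 0)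

/-- The part `Y` (even-labelled vertices of the paper): odd indices. -/
def crownY (n : ℕ) : Finset (Fin (2 * n)) := Finset.univ.filter (fun u => u.val % 2 = 1)

/-!
Away from the perfect matching `{2i-1, 2i}`, every vertex of `X` is adjacent to every vertex
of `Y`, so a surviving vertex of `X` reaches a surviving vertex of `Y` directly unless the two
are partners. Partners `x, y` are joined by a path `x - y' - x' - y` through other survivors;
its middle edge is only missing when `x', y'` are partners too, and then a fifth survivor on
one side replaces `x'` or `y'`.
-/

open Finset

namespace Finset

theorem exists_mem_ne_ne {α : Type*} [DecidableEq α] {s : Finset α} (hs : 2 < #s) (a b : α) :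
    ∃ c ∈ s, c ≠ a ∧ c ≠ b := by
  have : 1 < #(s.erase a) := by have := pred_card_le_card_erase (s := s) (a := a); omega
  obtain ⟨c, hc, hcb⟩ := (s.erase a).exists_mem_ne this b
  exact ⟨c, mem_of_mem_erase hc, ne_of_mem_erase hc, hcb⟩

end Finset

namespace SimpleGraph

variable {V : Type*} {G : SimpleGraph V} {A B : Finset V} {P : V → V → Prop}

theorem reachable_of_detour (hadj : ∀ a ∈ A, ∀ b ∈ B, ¬ P a b → G.Adj a b)
    {x x₁ y y₁ : V} (hx : x ∈ A) (hx₁ : x₁ ∈ A) (hy : y ∈ B) (hy₁ : y₁ ∈ B)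
    (h₁ : ¬ P x y₁) (h₂ : ¬ P x₁ y₁) (h₃ : ¬ P x₁ y) : G.Reachable x y :=
  ((hadj x hx y₁ hy₁ h₁).reachable.trans (hadj x₁ hx₁ y₁ hy₁ h₂).symm.reachable).trans
    (hadj x₁ hx₁ y hy h₃).reachable

theorem reachable_of_adj_off_matching [DecidableEq V]
    (hadj : ∀ a ∈ A, ∀ b ∈ B, ¬ P a b → G.Adj a b)
    (hfun : ∀ a b b', P a b → P a b' → b = b') (hinj : ∀ a a' b, P a b → P a' b → a = a')
    (hA : 2 ≤ #A) (hB : 2 ≤ #B) (hAB : 5 ≤ #A + #B) {x y : V} (hx : x ∈ A) (hy : y ∈ B) :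
    G.Reachable x y := by
  by_cases hxy : P x y
  swap
  · exact (hadj x hx y hy hxy).reachable
  have off_x : ∀ b, b ≠ y → ¬ P x b := fun b hb h => hb (hfun x y b hxy h).symm
  have off_y : ∀ a, a ≠ x → ¬ P a y := fun a ha h => ha (hinj a x y h hxy)
  obtain ⟨x', hx', hx'x⟩ := A.exists_mem_ne (by omega) x
  obtain ⟨y', hy', hy'y⟩ := B.exists_mem_ne (by omega) y
  by_cases hx'y' : P x' y'
  swap
  · exact reachable_of_detour hadj hx hx' hy hy' (off_x y' hy'y) hx'y' (off_y x' hx'x)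
  rcases (show 2 < #A ∨ 2 < #B by omega) with hA₃ | hB₃
  · obtain ⟨x'', hx'', hx''x, hx''x'⟩ := exists_mem_ne_ne hA₃ x x'
    exact reachable_of_detour hadj hx hx'' hy hy' (off_x y' hy'y)
      (fun h => hx''x' (hinj x'' x' y' h hx'y')) (off_y x'' hx''x)
  · obtain ⟨y'', hy'', hy''y, hy''y'⟩ := exists_mem_ne_ne hB₃ y y'
    exact reachable_of_detour hadj hx hx' hy hy'' (off_x y'' hy''y)
      (fun h => hy''y' (hfun x' y' y'' hx'y' h).symm) (off_y x' hx'x)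

theorem connected_of_adj_off_matching [DecidableEq V]
    (hadj : ∀ a ∈ A, ∀ b ∈ B, ¬ P a b → G.Adj a b)
    (hfun : ∀ a b b', P a b → P a b' → b = b') (hinj : ∀ a a' b, P a b → P a' b → a = a')
    (hA : 2 ≤ #A) (hB : 2 ≤ #B) (hAB : 5 ≤ #A + #B) (hcover : ∀ v, v ∈ A ∨ v ∈ B) :
    G.Connected := by
  have reach {x y : V} (hx : x ∈ A) (hy : y ∈ B) : G.Reachable x y :=
    reachable_of_adj_off_matching hadj hfun hinj hA hB hAB hx hy
  obtain ⟨x₀, hx₀⟩ := card_pos.mp (by omega : 0 < #A)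
  obtain ⟨y₀, hy₀⟩ := card_pos.mp (by omega : 0 < #B)
  refine (connected_iff_exists_forall_reachable G).mpr ⟨x₀, fun v => ?_⟩
  rcases hcover v with hv | hv
  · exact (reach hx₀ hy₀).trans (reach hv hy₀).symm
  · exact reach hx₀ hv

end SimpleGraph

theorem crown_induced_connected_general (n : ℕ) (T : Finset (Fin (2 * n)))
    (hX : 2 ≤ (crownX n \ T).card) (hY : 2 ≤ (crownY n \ T).card)
    (hXY : 5 ≤ (crownX n \ T).card + (crownY n \ T).card) :
    ((crownGraph n).induce ((↑T : Set (Fin (2 * n)))ᶜ)).Connected := by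
  classical
  let S : Set (Fin (2 * n)) := (↑T : Set (Fin (2 * n)))ᶜ
  have card_subtype_sdiff (s : Finset (Fin (2 * n))) : #((s \ T).subtype (· ∈ S)) = #(s \ T) := by
    rw [card_subtype, filter_true_of_mem fun v hv => by simpa [S] using (mem_sdiff.mp hv).2]
  refine connected_of_adj_off_matching (A := (crownX n \ T).subtype (· ∈ S))
    (B := (crownY n \ T).subtype (· ∈ S)) (P := fun u v => v.1.val = u.1.val + 1)
    ?_ ?_ ?_ (by rwa [card_subtype_sdiff]) (by rwa [card_subtype_sdiff])
    (by rwa [card_subtype_sdiff, card_subtype_sdiff]) ?_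
  · intro u hu v hv huv
    simp only [mem_subtype, mem_sdiff, crownX, crownY, mem_filter] at hu hv
    exact Or.inl ⟨hu.1.2, hv.1.2, huv⟩
  · intro u v w huv huw
    ext; omega
  · intro u w v huv hwv
    ext; omega
  · intro v
    have hvT : v.1 ∉ T := v.2
    simp only [mem_subtype, mem_sdiff, crownX, crownY, mem_filter, mem_univ, true_and, hvT,
      not_false_eq_true, and_true]
    omega

theorem crown_induced_connected (n : ℕ) (hn : 3 ≤ n) (T : Finset (Fin (2 * n)))
    (hX : 2 ≤ (crownX n \ T).card) (hY : 2 ≤ (crownY n \ T).card)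
    (hXY : 5 ≤ (crownX n \ T).card + (crownY n \ T).card) :
    ((crownGraph n).induce ((↑T : Set (Fin (2 * n)))ᶜ)).Connected :=
  crown_induced_connected_general n T hX hY hXY
end

section
/- Let n ≥ 3 and G = C_{n,n}, with X the odd vertices and Y the even vertices. A nonempty subset T ⊆ X has the cut point property if and only if T = X or T = X \ {2i-1} for some i ∈ [n]. -/
open SimpleGraph

/-- Number of connected components of the induced subgraph on `s`. -/
noncomputable def numComponents {V : Type*} (G : SimpleGraph V) (s : Set V) : ℕ :=
  Nat.card (G.induce s).ConnectedComponent


/-- `T` has the cut point property: `T = ∅` or each `i ∈ T` is a cut vertex of the induced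
subgraph on `Tᶜ ∪ {i}`, i.e. removing `i` increases the number of connected components. -/
def cutPointProperty {V : Type*} (G : SimpleGraph V) (T : Set V) : Prop :=
  T = ∅ ∨ ∀ i ∈ T, numComponents G Tᶜ > numComponents G (Tᶜ ∪ {i})

/-!
Write `S = X \ T`, so that the complement of `T` is `Y ∪ S`. For `n ≥ 3` any two vertices of `X`
have a common neighbour in `Y`, and each vertex of `Y` misses exactly one vertex of `X` (its
partner); hence `Y ∪ S'` is connected as soon as `S'` contains two vertices of `X`. So if `|S| ≥ 2`,
both `Tᶜ` and `Tᶜ ∪ {i}` are connected and no `i ∈ T` is a cut vertex. If `S = ∅`, then `Tᶜ = Y`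
is edgeless with `n ≥ 3` components, while `Y ∪ {i}` has at most two: the partner of `i` and the
star at `i`. If `S = {x}`, the partner of `x` is isolated in `Y ∪ {x}`, while `Y ∪ {x, i}` is
connected.
-/

namespace SimpleGraph

variable {V : Type*} {G : SimpleGraph V}

lemma Connected.card_connectedComponent (h : G.Connected) : Nat.card G.ConnectedComponent = 1 :=
  have := h.nonempty
  Nat.card_eq_one_iff_unique.mpr ⟨h.preconnected.subsingleton_connectedComponent, inferInstance⟩

lemma card_le_card_connectedComponent [Finite V] {ι : Type*} (f : ι → V)
    (hf : Pairwise fun i j => ¬G.Reachable (f i) (f j)) :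
    Nat.card ι ≤ Nat.card G.ConnectedComponent :=
  Nat.card_le_card_of_injective (G.connectedComponentMk ∘ f) fun _ _ hij =>
    by_contra fun hne => hf hne (ConnectedComponent.exact hij)

lemma card_connectedComponent_le_two (a b : V) (h : ∀ v, G.Reachable a v ∨ G.Reachable b v) :
    Nat.card G.ConnectedComponent ≤ 2 := by
  have hsurj : Function.Surjective ![G.connectedComponentMk a, G.connectedComponentMk b] := by
    refine ConnectedComponent.ind fun v => ?_
    rcases h v with hv | hv
    · exact ⟨0, ConnectedComponent.sound hv⟩
    · exact ⟨1, ConnectedComponent.sound hv⟩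
  simpa using Nat.card_le_card_of_surjective _ hsurj

end SimpleGraph

lemma numComponents_eq_one {V : Type*} {G : SimpleGraph V} {s : Set V}
    (h : (G.induce s).Connected) : numComponents G s = 1 :=
  h.card_connectedComponent

lemma Finset.eq_or_exists_eq_erase_iff_card_sdiff_le_one {α : Type*} [DecidableEq α]
    {s t : Finset α} (hts : t ⊆ s) :
    (t = s ∨ ∃ a ∈ s, t = s.erase a) ↔ (s \ t).card ≤ 1 := by
  rw [Nat.le_one_iff_eq_zero_or_eq_one, Finset.card_eq_zero, Finset.card_eq_one,
    Finset.sdiff_eq_empty_iff_subset, Finset.Subset.antisymm_iff, and_iff_right hts]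
  refine or_congr Iff.rfl ⟨?_, ?_⟩
  · rintro ⟨a, ha, rfl⟩
    exact ⟨a, Finset.sdiff_erase_self ha⟩
  · rintro ⟨a, ha⟩
    have has : a ∈ s := (Finset.mem_sdiff.mp (ha ▸ Finset.mem_singleton_self a)).1
    refine ⟨a, has, ?_⟩
    rw [← Finset.sdiff_singleton_eq_erase, ← ha, Finset.sdiff_sdiff_eq_self hts]

variable {n : ℕ}

@[simp] lemma mem_crownX {u : Fin (2 * n)} : u ∈ crownX n ↔ u.val % 2 = 0 := by
  simp [crownX]

@[simp] lemma mem_crownY {u : Fin (2 * n)} : u ∈ crownY n ↔ u.val % 2 = 1 := by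
  simp [crownY]

lemma crownY_subset_compl {s : Finset (Fin (2 * n))} (hs : s ⊆ crownX n) :
    (↑(crownY n) : Set (Fin (2 * n))) ⊆ (↑s)ᶜ := fun v hv hvs => by
  have := hs hvs
  simp_all

lemma compl_crownX : (↑(crownX n) : Set (Fin (2 * n)))ᶜ = ↑(crownY n) := by
  ext v
  simp only [Set.mem_compl_iff, Finset.mem_coe, mem_crownX, mem_crownY]
  omega

lemma crownGraph_adj_of_mod_two {u v : Fin (2 * n)} (hu : u.val % 2 = 0) (hv : v.val % 2 = 1)
    (h : v.val ≠ u.val + 1) : (crownGraph n).Adj u v :=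
  Or.inl ⟨hu, hv, h⟩

lemma crownGraph_induce_crownY : (crownGraph n).induce ↑(crownY n) = ⊥ := by
  ext ⟨u, hu⟩ ⟨v, hv⟩
  simp only [Finset.mem_coe, mem_crownY] at hu hv
  simp only [comap_adj, Function.Embedding.subtype_apply, bot_adj, iff_false]
  rintro (⟨h, -⟩ | ⟨h, -⟩) <;> omega

lemma crownGraph_exists_common_adj (hn : 3 ≤ n) {a b : Fin (2 * n)} (ha : a.val % 2 = 0)
    (hb : b.val % 2 = 0) : ∃ w, w.val % 2 = 1 ∧ (crownGraph n).Adj a w ∧ (crownGraph n).Adj b w := by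
  obtain ⟨w, hw, hwa, hwb⟩ : ∃ w ∈ [1, 3, 5], w ≠ a.val + 1 ∧ w ≠ b.val + 1 := by
    simp only [List.mem_cons, List.not_mem_nil, or_false, exists_eq_or_imp, exists_eq_left]
    omega
  simp only [List.mem_cons, List.not_mem_nil, or_false] at hw
  have hw2n : w < 2 * n := by omega
  have hwodd : w % 2 = 1 := by omega
  exact ⟨⟨w, hw2n⟩, hwodd, crownGraph_adj_of_mod_two ha hwodd hwa,
    crownGraph_adj_of_mod_two hb hwodd hwb⟩

lemma crownGraph_induce_connected (hn : 3 ≤ n) {s : Set (Fin (2 * n))}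
    (hY : ↑(crownY n) ⊆ s) {a b : Fin (2 * n)} (ha : a ∈ s) (hb : b ∈ s)
    (hae : a.val % 2 = 0) (hbe : b.val % 2 = 0) (hab : a ≠ b) :
    ((crownGraph n).induce s).Connected := by
  set H := (crownGraph n).induce s
  have reach_even (u : Fin (2 * n)) (hu : u ∈ s) (hue : u.val % 2 = 0) :
      H.Reachable ⟨a, ha⟩ ⟨u, hu⟩ := by
    obtain ⟨w, hw, haw, huw⟩ := crownGraph_exists_common_adj hn hae hue
    have hws : w ∈ s := hY (by simpa using hw)
    exact (show H.Adj ⟨a, ha⟩ ⟨w, hws⟩ from haw).reachable.trans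
      (show H.Adj ⟨w, hws⟩ ⟨u, hu⟩ from huw.symm).reachable
  refine (connected_iff_exists_forall_reachable H).mpr ⟨⟨a, ha⟩, fun ⟨v, hv⟩ => ?_⟩
  rcases Nat.mod_two_eq_zero_or_one v.val with hve | hvo
  · exact reach_even v hv hve
  -- `v` is the partner of at most one of `a`, `b`
  by_cases hva : v.val = a.val + 1
  · have hvb : v.val ≠ b.val + 1 := fun h => hab (Fin.ext (by omega))
    exact (reach_even b hb hbe).trans
      (show H.Adj ⟨b, hb⟩ ⟨v, hv⟩ from crownGraph_adj_of_mod_two hbe hvo hvb).reachable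
  · exact (show H.Adj ⟨a, ha⟩ ⟨v, hv⟩ from crownGraph_adj_of_mod_two hae hvo hva).reachable

lemma le_numComponents_crownGraph_crownY : n ≤ numComponents (crownGraph n) ↑(crownY n) := by
  let f : Fin n → (↑(crownY n) : Set (Fin (2 * n))) := fun j => ⟨⟨2 * j + 1, by omega⟩, by simp⟩
  have hf : Pairwise fun i j => ¬((crownGraph n).induce ↑(crownY n)).Reachable (f i) (f j) := by
    intro i j hij h
    rw [crownGraph_induce_crownY, reachable_bot] at h
    exact hij (Fin.ext (by simpa [f, Fin.ext_iff] using h))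
  exact (Nat.card_fin n).symm.trans_le (card_le_card_connectedComponent f hf)

lemma numComponents_crownGraph_crownY_union_le_two {i : Fin (2 * n)} (hi : i.val % 2 = 0) :
    numComponents (crownGraph n) (↑(crownY n) ∪ {i}) ≤ 2 := by
  have hp : i.val + 1 < 2 * n := by omega
  refine card_connectedComponent_le_two ⟨i, Or.inr rfl⟩
    ⟨⟨i.val + 1, hp⟩, Or.inl (by simp; omega)⟩ fun ⟨v, hv⟩ => ?_
  by_cases hvp : v.val = i.val + 1
  · obtain rfl : v = ⟨i.val + 1, hp⟩ := Fin.ext hvp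
    exact Or.inr .rfl
  rcases hv with hv | rfl
  · refine Or.inl (Adj.reachable ?_)
    exact crownGraph_adj_of_mod_two hi (by simpa using hv) hvp
  · exact Or.inl .rfl

lemma two_le_numComponents_crownGraph_compl_erase {x : Fin (2 * n)} (hx : x.val % 2 = 0) :
    2 ≤ numComponents (crownGraph n) (↑((crownX n).erase x))ᶜ := by
  set s : Set (Fin (2 * n)) := (↑((crownX n).erase x))ᶜ
  have hp : x.val + 1 < 2 * n := by omega
  have hps : (⟨x.val + 1, hp⟩ : Fin (2 * n)) ∈ s := by simp [s]; omega
  have hxs : x ∈ s := by simp [s]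
  have hiso : ((crownGraph n).induce s).IsIsolated ⟨_, hps⟩ := by
    rintro ⟨w, hw⟩ hadj
    change (crownGraph n).Adj ⟨x.val + 1, hp⟩ w at hadj
    rcases hadj with ⟨h, -⟩ | ⟨hw0, -, hpw⟩
    · rw [Fin.val_mk] at h
      omega
    · obtain rfl : w = x := by_contra fun hwx => hw (by simp [hwx, hw0])
      exact hpw rfl
  have hne : ((crownGraph n).induce s).connectedComponentMk ⟨_, hps⟩ ≠
      ((crownGraph n).induce s).connectedComponentMk ⟨x, hxs⟩ := fun h =>
    not_reachable_of_neighborSet_left_eq_empty (by simp [Fin.ext_iff])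
      hiso.neighborSet_eq_empty (ConnectedComponent.exact h)
  exact Finite.one_lt_card_iff_nontrivial.mpr ⟨_, _, hne⟩

theorem crown_cutPointProperty_subset_X (n : ℕ) (hn : 3 ≤ n) (T : Finset (Fin (2 * n)))
    (hne : T.Nonempty) (hTX : T ⊆ crownX n) :
    cutPointProperty (crownGraph n) (↑T : Set (Fin (2 * n))) ↔
      (T = crownX n ∨ ∃ v ∈ crownX n, T = (crownX n).erase v) := by
  refine ⟨fun hcut => ?_, ?_⟩
  · replace hcut := hcut.resolve_left (by simpa using hne.ne_empty)
    rw [Finset.eq_or_exists_eq_erase_iff_card_sdiff_le_one hTX, Finset.card_le_one]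
    intro a ha b hb
    by_contra hab
    simp only [Finset.mem_sdiff, mem_crownX] at ha hb
    obtain ⟨i, hi⟩ := hne
    have hY := crownY_subset_compl hTX
    have hT : numComponents (crownGraph n) (↑T)ᶜ = 1 := numComponents_eq_one <|
      crownGraph_induce_connected hn hY ha.2 hb.2 ha.1 hb.1 hab
    have hTi : numComponents (crownGraph n) ((↑T)ᶜ ∪ {i}) = 1 := numComponents_eq_one <|
      crownGraph_induce_connected hn (hY.trans Set.subset_union_left)
        (Or.inl ha.2) (Or.inl hb.2) ha.1 hb.1 hab
    have := hcut i hi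
    omega
  · rintro (rfl | ⟨x, hx, rfl⟩) <;> refine Or.inr fun i hi => ?_
    · rw [compl_crownX]
      have := le_numComponents_crownGraph_crownY (n := n)
      have := numComponents_crownGraph_crownY_union_le_two (by simpa using hi)
      omega
    · obtain ⟨hi, hix⟩ : i.val % 2 = 0 ∧ i ≠ x := by simpa using hi
      rw [mem_crownX] at hx
      have hconn : ((crownGraph n).induce ((↑((crownX n).erase x))ᶜ ∪ {i})).Connected :=
        crownGraph_induce_connected hn
          ((crownY_subset_compl (Finset.erase_subset x _)).trans Set.subset_union_left)
          (Or.inr rfl) (Or.inl (by simp)) hi hx hix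
      rw [numComponents_eq_one hconn]
      exact two_le_numComponents_crownGraph_compl_erase hx
end

section
/- Let n ≥ 3 and G = C_{n,n}. If T = X \ {2i-1} for some i ∈ [n], where X is the set of odd vertices, then the induced subgraph of G on [2n] \ T has exactly two connected components. -/
open SimpleGraph

/-! After deleting `X \ {v}` only `v` and the part `Y` remain. The vertex `v` is adjacent to every
vertex of `Y` except its partner `v + 1`, and that partner has lost all its neighbours, which lie
in `X \ {v}`. So the components are `{v + 1}` and everything else. -/

namespace SimpleGraph

variable {V : Type*} {G : SimpleGraph V}

theorem IsIsolated.eq_of_reachable {u w : V} (hw : G.IsIsolated w) (h : G.Reachable w u) :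
    u = w := by
  obtain ⟨p⟩ := h
  cases p with
  | nil => rfl
  | cons hadj _ => exact absurd hadj (hw _)

theorem card_connectedComponent_eq_two_of_isIsolated {c w : V} (hcw : c ≠ w)
    (hw : G.IsIsolated w) (hc : ∀ u, u ≠ c → u ≠ w → G.Adj c u) :
    Nat.card G.ConnectedComponent = 2 := by
  rw [Nat.card_eq_two_iff' (G.connectedComponentMk w)]
  refine ⟨G.connectedComponentMk c,
    fun h => hcw (hw.eq_of_reachable (ConnectedComponent.exact h).symm), ?_⟩
  refine ConnectedComponent.ind fun u hu => ?_
  have huw : u ≠ w := fun h => hu (h ▸ rfl)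
  by_cases huc : u = c
  · rw [huc]
  · exact ConnectedComponent.sound (hc u huc huw).reachable.symm

end SimpleGraph

theorem crownGraph_adj_iff_of_even {n : ℕ} {u x : Fin (2 * n)} (hu : u.val % 2 = 0) :
    (crownGraph n).Adj u x ↔ x.val % 2 = 1 ∧ x.val ≠ u.val + 1 := by
  simp only [crownGraph]
  omega

theorem crownGraph_adj_succ_iff_of_even {n : ℕ} {u x : Fin (2 * n)} (hu : u.val % 2 = 0)
    (hu' : u.val + 1 < 2 * n) :
    (crownGraph n).Adj x ⟨u.val + 1, hu'⟩ ↔ x.val % 2 = 0 ∧ x ≠ u := by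
  simp only [crownGraph, ne_eq, Fin.ext_iff]
  omega

theorem mem_compl_crownX_erase_iff {n : ℕ} {v w : Fin (2 * n)} :
    w ∈ (↑((crownX n).erase v) : Set (Fin (2 * n)))ᶜ ↔ w = v ∨ w.val % 2 = 1 := by
  simp only [Set.mem_compl_iff, Finset.mem_coe, Finset.mem_erase, crownX, Finset.mem_filter,
    Finset.mem_univ, true_and, not_and_or, not_not]
  omega

theorem crown_components_erase_general (n : ℕ) (v : Fin (2 * n)) (hv : v ∈ crownX n) :
    numComponents (crownGraph n) ((↑((crownX n).erase v) : Set (Fin (2 * n)))ᶜ) = 2 := by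
  have hv : v.val % 2 = 0 := by simpa [crownX] using hv
  have hv' : v.val + 1 < 2 * n := by omega
  set s : Set (Fin (2 * n)) := (↑((crownX n).erase v) : Set (Fin (2 * n)))ᶜ
  let c : s := ⟨v, mem_compl_crownX_erase_iff.2 (.inl rfl)⟩
  let w : s := ⟨⟨v.val + 1, hv'⟩, mem_compl_crownX_erase_iff.2 (.inr (by simp; omega))⟩
  refine card_connectedComponent_eq_two_of_isIsolated (G := (crownGraph n).induce s)
    (c := c) (w := w) (fun h => by simpa [c, w, Fin.ext_iff] using congrArg Subtype.val h) ?_ ?_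
  · rintro ⟨x, hx⟩ hadj
    have hadj : (crownGraph n).Adj x ⟨v.val + 1, hv'⟩ := hadj.symm
    obtain ⟨hx_even, hxv⟩ := (crownGraph_adj_succ_iff_of_even hv hv').1 hadj
    rcases mem_compl_crownX_erase_iff.1 hx with hx | hx_odd
    · exact hxv hx
    · omega
  · rintro ⟨x, hx⟩ hxc hxw
    have hxv : x ≠ v := fun h => hxc (Subtype.ext h)
    have hxw : x.val ≠ v.val + 1 := fun h => hxw (Subtype.ext (Fin.ext h))
    exact (crownGraph_adj_iff_of_even hv).2
      ⟨(mem_compl_crownX_erase_iff.1 hx).resolve_left hxv, hxw⟩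

theorem crown_components_erase (n : ℕ) (hn : 3 ≤ n) (v : Fin (2 * n)) (hv : v ∈ crownX n) :
    numComponents (crownGraph n) ((↑((crownX n).erase v) : Set (Fin (2 * n)))ᶜ) = 2 :=
  crown_components_erase_general n v hv
end
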